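/- Main error bound (ℓ∞-term): Under the same assumptions (x̂ the constrained LASSO solution, x* feasible with ‖Φ̃ᵀ(Φ̃x* − ỹ)‖∞ ≤ λΔ/2, A₀(Φ̃) > 0, Φ̃ with M̃ rows), the error h = x̂ − x* satisfies ‖h‖₂ ≤ C₂(Φ̃)√M̃ Δ + (C₁(Φ̃)/√l)‖x*_{T₀ᶜ}‖₁. -/

import Mathlib

def restrict {N : ℕ} (T : Finset (Fin N)) (h : Fin N → ℝ) : Fin N → ℝ :=
  fun i => if i ∈ T then h i else 0

def l2sq {m : ℕ} (v : Fin m → ℝ) : ℝ := ∑ i, v i ^ 2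
noncomputable def l2Norm {m : ℕ} (v : Fin m → ℝ) : ℝ := Real.sqrt (∑ i, v i ^ 2)
def l1Norm {N : ℕ} (v : Fin N → ℝ) : ℝ := ∑ i, |v i|
noncomputable def linfNorm {m : ℕ} (v : Fin m → ℝ) : ℝ := ⨆ i, |v i|

noncomputable def rhoMinus {m N : ℕ} (k : ℕ) (Ψ : Matrix (Fin m) (Fin N) ℝ) : ℝ :=
  sInf {r | ∃ (T : Finset (Fin N)) (h : Fin N → ℝ), T.card ≤ k ∧ restrict T h ≠ 0 ∧
    r = l2sq (Ψ.mulVec (restrict T h)) / l2sq (restrict T h)}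

noncomputable def rhoPlus {m N : ℕ} (k : ℕ) (Ψ : Matrix (Fin m) (Fin N) ℝ) : ℝ :=
  sSup {r | ∃ (T : Finset (Fin N)) (h : Fin N → ℝ), T.card ≤ k ∧ restrict T h ≠ 0 ∧
    r = l2sq (Ψ.mulVec (restrict T h)) / l2sq (restrict T h)}

noncomputable def A0 {m N : ℕ} (s l : ℕ) (Ψ : Matrix (Fin m) (Fin N) ℝ) : ℝ :=
  rhoMinus (s + l) Ψ - 3 * Real.sqrt ((s : ℝ) / l) * (rhoPlus (s + 2 * l) Ψ - rhoMinus (s + 2 * l) Ψ)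

noncomputable def A1 {m N : ℕ} (s l : ℕ) (Ψ : Matrix (Fin m) (Fin N) ℝ) : ℝ :=
  4 * (rhoPlus (s + 2 * l) Ψ - rhoMinus (s + 2 * l) Ψ)

noncomputable def C1 {m N : ℕ} (s l : ℕ) (Ψ : Matrix (Fin m) (Fin N) ℝ) : ℝ :=
  4 + Real.sqrt (1 + 9 * (s : ℝ) / l) * A1 s l Ψ / A0 s l Ψ

noncomputable def C2 {m N : ℕ} (s l : ℕ) (Ψ : Matrix (Fin m) (Fin N) ℝ) : ℝ :=
  Real.sqrt ((1 + 9 * (s : ℝ) / l) / A0 s l Ψ)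

noncomputable def lassoObj {Mt N : ℕ} (Φ : Matrix (Fin Mt) (Fin N) ℝ) (y : Fin Mt → ℝ)
    (lam Δ : ℝ) (x : Fin N → ℝ) : ℝ :=
  (1 / 2) * l2sq (Φ.mulVec x - y) + lam * Δ * l1Norm x

/-- Feasible set: ℓ∞ quantization constraint plus affine saturation constraints. -/
def feasible {Mt Mb N : ℕ} (Φt : Matrix (Fin Mt) (Fin N) ℝ) (yt : Fin Mt → ℝ)
    (Φb : Matrix (Fin Mb) (Fin N) ℝ) (yb : Fin Mb → ℝ) (Δ : ℝ) : Set (Fin N → ℝ) :=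
  {x | (∀ i, |(Φt.mulVec x - yt) i| ≤ Δ / 2) ∧ ∀ i, yb i ≤ Φb.mulVec x i}

/-!
The error `h = x̂ - x*` lies in the cone `‖h_{T₀ᶜ}‖₁ ≤ 3 ‖h_{T₀}‖₁ + 4 ‖x*_{T₀ᶜ}‖₁`: this is the
optimality of `x̂` against the feasible point `x*`, combined with the dual bound at `x*`.
With `W = T₀ ∪ T₁`, the restricted isometry constants then give
`‖Φ̃h‖² ≥ A₀ ‖h_W‖² - (A₁/√l) ‖x*_{T₀ᶜ}‖₁ ‖h_W‖`, the cross term between `h_W` and the tail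
`h_{Wᶜ}` being controlled by cutting the tail into blocks of `l` entries of decreasing size.
Since both `x̂` and `x*` satisfy the `ℓ∞` constraint, `‖Φ̃h‖² ≤ M̃Δ²`, and this quadratic
inequality bounds `‖h_W‖`; the cone condition bounds the tail by `‖h_{Wᶜ}‖₂ ≤ ‖h_{T₀ᶜ}‖₁/√l`.
-/

open Finset hiding restrict
open Matrix

lemma le_add_sqrt_of_sq_le_mul_add {X b c : ℝ} (hb : 0 ≤ b) (hc : 0 ≤ c)
    (h : X ^ 2 ≤ b * X + c) : X ≤ b + √c := by
  by_contra! hX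
  nlinarith [Real.sq_sqrt hc, Real.sqrt_nonneg c]

lemma sqrt_sq_add_sq_le {X Z q r : ℝ} (hX : 0 ≤ X) (hr : 0 ≤ r) (hZ : 0 ≤ Z)
    (h : Z ≤ q * X + r) : √(X ^ 2 + Z ^ 2) ≤ X * √(1 + q ^ 2) + r := by
  have hs : q ≤ √(1 + q ^ 2) := Real.le_sqrt_of_sq_le (by linarith)
  have hs2 := Real.sq_sqrt (by positivity : (0 : ℝ) ≤ 1 + q ^ 2)
  rw [Real.sqrt_le_iff]
  refine ⟨by positivity, ?_⟩
  nlinarith [mul_le_mul_of_nonneg_left hs (mul_nonneg hX hr), mul_self_le_mul_self hZ h]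

lemma sqrt_sq_add_sq_le_of_quadratic {A₀ A₁ L M Δ a q X Z : ℝ} (hA₀ : 0 < A₀) (hA₁ : 0 ≤ A₁)
    (hL : 0 < L) (hM : 0 ≤ M) (hΔ : 0 ≤ Δ) (ha : 0 ≤ a) (hX : 0 ≤ X) (hZ : 0 ≤ Z)
    (hquad : A₀ * X ^ 2 - A₁ / L * a * X ≤ M * Δ ^ 2) (htail : Z ≤ q * X + 4 * a / L) :
    √(X ^ 2 + Z ^ 2) ≤ √((1 + q ^ 2) / A₀) * √M * Δ + (4 + √(1 + q ^ 2) * A₁ / A₀) / L * a := by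
  have hXb : X ≤ A₁ / L * a / A₀ + √M * Δ / √A₀ := by
    rw [← Real.sqrt_sq hΔ, ← Real.sqrt_mul hM, ← Real.sqrt_div' _ hA₀.le]
    refine le_add_sqrt_of_sq_le_mul_add (by positivity) (by positivity) ?_
    rw [div_mul_eq_mul_div, ← add_div, le_div_iff₀ hA₀]
    linarith
  calc _ ≤ X * √(1 + q ^ 2) + 4 * a / L := sqrt_sq_add_sq_le hX (by positivity) hZ htail
    _ ≤ (A₁ / L * a / A₀ + √M * Δ / √A₀) * √(1 + q ^ 2) + 4 * a / L := by gcongr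
    _ = _ := by
        rw [Real.sqrt_div' _ hA₀.le]
        field_simp
        ring

section Vectors

variable {m N : ℕ}

lemma l2sq_eq_dotProduct (v : Fin m → ℝ) : l2sq v = v ⬝ᵥ v := by
  simp only [l2sq, dotProduct, sq]

lemma l2sq_nonneg (v : Fin m → ℝ) : 0 ≤ l2sq v :=
  sum_nonneg fun _ _ => sq_nonneg _

lemma l2Norm_nonneg (v : Fin m → ℝ) : 0 ≤ l2Norm v := Real.sqrt_nonneg _

lemma l2Norm_sq (v : Fin m → ℝ) : l2Norm v ^ 2 = l2sq v :=
  Real.sq_sqrt (l2sq_nonneg v)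

lemma l2sq_eq_zero_iff {v : Fin m → ℝ} : l2sq v = 0 ↔ v = 0 := by
  rw [l2sq_eq_dotProduct, dotProduct_self_eq_zero]

lemma l2sq_pos {v : Fin m → ℝ} (hv : v ≠ 0) : 0 < l2sq v :=
  (l2sq_nonneg v).lt_of_ne' (mt l2sq_eq_zero_iff.1 hv)

lemma l2sq_add (u v : Fin m → ℝ) : l2sq (u + v) = l2sq u + 2 * (u ⬝ᵥ v) + l2sq v := by
  simp only [l2sq_eq_dotProduct, add_dotProduct, dotProduct_add, dotProduct_comm v u]
  ring

lemma l2sq_smul_add_smul (α β : ℝ) (u v : Fin m → ℝ) :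
    l2sq (α • u + β • v) = α ^ 2 * l2sq u + 2 * α * β * (u ⬝ᵥ v) + β ^ 2 * l2sq v := by
  rw [l2sq_add]
  simp only [l2sq_eq_dotProduct, smul_dotProduct, dotProduct_smul, smul_eq_mul]
  ring

lemma l1Norm_nonneg (v : Fin N → ℝ) : 0 ≤ l1Norm v :=
  sum_nonneg fun _ _ => abs_nonneg _

lemma abs_dotProduct_le_l1Norm_mul_linfNorm (u v : Fin N → ℝ) :
    |u ⬝ᵥ v| ≤ l1Norm u * linfNorm v := by
  have hv : ∀ j, |v j| ≤ linfNorm v := le_ciSup (Set.finite_range _).bddAbove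
  calc |u ⬝ᵥ v| ≤ ∑ j, |u j| * |v j| := by
        simpa only [dotProduct, abs_mul] using abs_sum_le_sum_abs (fun j => u j * v j) univ
    _ ≤ ∑ j, |u j| * linfNorm v := by gcongr with j; exact hv j
    _ = l1Norm u * linfNorm v := by rw [l1Norm, sum_mul]

lemma l2sq_restrict (T : Finset (Fin N)) (h : Fin N → ℝ) :
    l2sq (restrict T h) = ∑ i ∈ T, h i ^ 2 := by
  simp [l2sq, restrict, ite_pow, sum_ite_mem]

lemma l1Norm_restrict (T : Finset (Fin N)) (h : Fin N → ℝ) :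
    l1Norm (restrict T h) = ∑ i ∈ T, |h i| := by
  simp [l1Norm, restrict, apply_ite, sum_ite_mem]

lemma restrict_add_restrict_sdiff {B S : Finset (Fin N)} (hBS : B ⊆ S) (h : Fin N → ℝ) :
    restrict B h + restrict (S \ B) h = restrict S h := by
  ext i
  by_cases hB : i ∈ B
  · simp [restrict, hB, hBS hB]
  · by_cases hS : i ∈ S <;> simp [restrict, hB, hS]

lemma restrict_add_restrict_compl (T : Finset (Fin N)) (h : Fin N → ℝ) :
    restrict T h + restrict Tᶜ h = h := by
  ext i
  by_cases hT : i ∈ T <;> simp [restrict, hT]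

lemma dotProduct_restrict_of_disjoint {U V : Finset (Fin N)} (hUV : Disjoint U V)
    (u v : Fin N → ℝ) : restrict U u ⬝ᵥ restrict V v = 0 := by
  refine sum_eq_zero fun i _ => ?_
  by_cases hU : i ∈ U
  · simp [restrict, disjoint_left.1 hUV hU]
  · simp [restrict, hU]

lemma l2Norm_eq_sqrt_add_compl (T : Finset (Fin N)) (h : Fin N → ℝ) :
    l2Norm h = √(l2Norm (restrict T h) ^ 2 + l2Norm (restrict Tᶜ h) ^ 2) := by
  rw [l2Norm_sq, l2Norm_sq, l2sq_restrict, l2sq_restrict, sum_add_sum_compl]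
  rfl

lemma l1Norm_eq_add_compl (T : Finset (Fin N)) (h : Fin N → ℝ) :
    l1Norm h = l1Norm (restrict T h) + l1Norm (restrict Tᶜ h) := by
  rw [l1Norm_restrict, l1Norm_restrict, l1Norm, sum_add_sum_compl]

lemma l1Norm_restrict_eq_add_sdiff {B S : Finset (Fin N)} (hBS : B ⊆ S) (h : Fin N → ℝ) :
    l1Norm (restrict S h) = l1Norm (restrict B h) + l1Norm (restrict (S \ B) h) := by
  rw [l1Norm_restrict, l1Norm_restrict, l1Norm_restrict, sum_sdiff_eq_sub hBS]
  ring

lemma l2Norm_restrict_mono {A B : Finset (Fin N)} (hAB : A ⊆ B) (h : Fin N → ℝ) :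
    l2Norm (restrict A h) ≤ l2Norm (restrict B h) := by
  refine Real.sqrt_le_sqrt ?_
  rw [← l2sq, ← l2sq, l2sq_restrict, l2sq_restrict]
  exact sum_le_sum_of_subset_of_nonneg hAB fun i _ _ => sq_nonneg (h i)

lemma l1Norm_restrict_le_sqrt_card_mul (T : Finset (Fin N)) (h : Fin N → ℝ) :
    l1Norm (restrict T h) ≤ √T.card * l2Norm (restrict T h) := by
  rw [l1Norm_restrict, l2Norm, ← l2sq, l2sq_restrict, ← Real.sqrt_mul (Nat.cast_nonneg _)]
  refine Real.le_sqrt_of_sq_le ?_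
  simpa using sq_sum_le_card_mul_sum_sq (s := T) (f := fun i => |h i|)

lemma l2sq_restrict_le_card_mul_sq {T : Finset (Fin N)} {h : Fin N → ℝ} {c : ℝ}
    (hT : ∀ i ∈ T, |h i| ≤ c) : l2sq (restrict T h) ≤ T.card * c ^ 2 := by
  rw [l2sq_restrict, ← nsmul_eq_mul]
  exact sum_le_card_nsmul _ _ _ fun i hi => sq_le_sq' (abs_le.1 (hT i hi)).1 (abs_le.1 (hT i hi)).2

lemma l2sq_restrict_le_mul_l1Norm {T : Finset (Fin N)} {h : Fin N → ℝ} {c : ℝ}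
    (hT : ∀ i ∈ T, |h i| ≤ c) : l2sq (restrict T h) ≤ c * l1Norm (restrict T h) := by
  rw [l2sq_restrict, l1Norm_restrict, mul_sum]
  exact sum_le_sum fun i hi => by
    rw [← sq_abs, sq]; exact mul_le_mul_of_nonneg_right (hT i hi) (abs_nonneg _)

lemma l2Norm_restrict_le_sqrt_mul {T : Finset (Fin N)} {h : Fin N → ℝ} {c : ℝ} (hc : 0 ≤ c)
    (hT : ∀ i ∈ T, |h i| ≤ c) {l : ℕ} (hcard : T.card ≤ l) :
    l2Norm (restrict T h) ≤ √l * c := by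
  rw [← Real.sqrt_sq hc, ← Real.sqrt_mul (Nat.cast_nonneg _)]
  refine Real.sqrt_le_sqrt ((l2sq_restrict_le_card_mul_sq hT).trans ?_)
  gcongr

end Vectors

section RestrictedIsometry

variable {m N : ℕ} (Ψ : Matrix (Fin m) (Fin N) ℝ)

lemma restrict_eq_self {T : Finset (Fin N)} {v : Fin N → ℝ} (hv : ∀ i ∉ T, v i = 0) :
    restrict T v = v := by
  ext i
  by_cases hi : i ∈ T <;> simp [restrict, hi, hv]

def sparseRayleighQuotients (k : ℕ) : Set ℝ :=
  {r | ∃ (T : Finset (Fin N)) (h : Fin N → ℝ), T.card ≤ k ∧ restrict T h ≠ 0 ∧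
    r = l2sq (Ψ *ᵥ restrict T h) / l2sq (restrict T h)}

lemma rhoMinus_eq_sInf (k : ℕ) : rhoMinus k Ψ = sInf (sparseRayleighQuotients Ψ k) := rfl

lemma rhoPlus_eq_sSup (k : ℕ) : rhoPlus k Ψ = sSup (sparseRayleighQuotients Ψ k) := rfl

lemma l2sq_mulVec_le (w : Fin N → ℝ) :
    l2sq (Ψ *ᵥ w) ≤ (∑ i, ∑ j, Ψ i j ^ 2) * l2sq w := by
  rw [l2sq, sum_mul]
  refine sum_le_sum fun i _ => ?_
  simpa [mulVec, dotProduct, l2sq] using sum_mul_sq_le_sq_mul_sq univ (Ψ i) w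

lemma bddBelow_sparseRayleighQuotients (k : ℕ) : BddBelow (sparseRayleighQuotients Ψ k) := by
  refine ⟨0, ?_⟩
  rintro _ ⟨T, h, -, -, rfl⟩
  exact div_nonneg (l2sq_nonneg _) (l2sq_nonneg _)

lemma bddAbove_sparseRayleighQuotients (k : ℕ) : BddAbove (sparseRayleighQuotients Ψ k) := by
  refine ⟨∑ i, ∑ j, Ψ i j ^ 2, ?_⟩
  rintro _ ⟨T, h, -, hne, rfl⟩
  rw [div_le_iff₀ (l2sq_pos hne)]
  exact l2sq_mulVec_le Ψ _

lemma div_mem_sparseRayleighQuotients {k : ℕ} {T : Finset (Fin N)} (hT : T.card ≤ k)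
    {v : Fin N → ℝ} (hv : ∀ i ∉ T, v i = 0) (hv0 : v ≠ 0) :
    l2sq (Ψ *ᵥ v) / l2sq v ∈ sparseRayleighQuotients Ψ k :=
  ⟨T, v, hT, by rwa [restrict_eq_self hv], by rw [restrict_eq_self hv]⟩

lemma rhoMinus_mul_l2sq_le {k : ℕ} {T : Finset (Fin N)} (hT : T.card ≤ k)
    {v : Fin N → ℝ} (hv : ∀ i ∉ T, v i = 0) :
    rhoMinus k Ψ * l2sq v ≤ l2sq (Ψ *ᵥ v) := by
  rcases eq_or_ne v 0 with rfl | hv0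
  · simp [l2sq]
  rw [← le_div_iff₀ (l2sq_pos hv0)]
  exact csInf_le (bddBelow_sparseRayleighQuotients Ψ k)
    (div_mem_sparseRayleighQuotients Ψ hT hv hv0)

lemma l2sq_mulVec_le_rhoPlus_mul {k : ℕ} {T : Finset (Fin N)} (hT : T.card ≤ k)
    {v : Fin N → ℝ} (hv : ∀ i ∉ T, v i = 0) :
    l2sq (Ψ *ᵥ v) ≤ rhoPlus k Ψ * l2sq v := by
  rcases eq_or_ne v 0 with rfl | hv0
  · simp [l2sq]
  rw [← div_le_iff₀ (l2sq_pos hv0)]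
  exact le_csSup (bddAbove_sparseRayleighQuotients Ψ k)
    (div_mem_sparseRayleighQuotients Ψ hT hv hv0)

lemma rhoMinus_le_rhoPlus (k : ℕ) : rhoMinus k Ψ ≤ rhoPlus k Ψ := by
  rcases (sparseRayleighQuotients Ψ k).eq_empty_or_nonempty with h | h
  · simp [rhoMinus_eq_sInf, rhoPlus_eq_sSup, h]
  · exact csInf_le_csSup h (bddBelow_sparseRayleighQuotients Ψ k)
      (bddAbove_sparseRayleighQuotients Ψ k)

lemma A1_nonneg (s l : ℕ) : 0 ≤ A1 s l Ψ := by
  rw [A1]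
  linarith [rhoMinus_le_rhoPlus Ψ (s + 2 * l)]

lemma abs_dotProduct_mulVec_restrict_le {k : ℕ} {U V : Finset (Fin N)} (hUV : Disjoint U V)
    (hk : U.card + V.card ≤ k) (u v : Fin N → ℝ) :
    |(Ψ *ᵥ restrict U u) ⬝ᵥ (Ψ *ᵥ restrict V v)| ≤
      (rhoPlus k Ψ - rhoMinus k Ψ) / 2 * l2Norm (restrict U u) * l2Norm (restrict V v) := by
  set a := restrict U u
  set b := restrict V v
  set α := l2Norm a
  set β := l2Norm b
  have hcard : (U ∪ V).card ≤ k := (card_union_le U V).trans hk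
  -- `β • a ± α • b` are `(U ∪ V)`-sparse with squared norm `2 α² β²`, and the difference
  -- of the squared norms of their images is `± 4 α β ⟪Ψ a, Ψ b⟫`.
  have hsupp (t : ℝ) : ∀ i ∉ U ∪ V, (β • a + t • b) i = 0 := by
    intro i hi
    simp only [mem_union, not_or] at hi
    simp [a, b, restrict, hi.1, hi.2]
  have hnorm (t : ℝ) (ht : t ^ 2 = α ^ 2) : l2sq (β • a + t • b) = 2 * α ^ 2 * β ^ 2 := by
    rw [l2sq_smul_add_smul, dotProduct_restrict_of_disjoint hUV, ← l2Norm_sq a, ← l2Norm_sq b, ht]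
    ring
  have himage (t : ℝ) : l2sq (Ψ *ᵥ (β • a + t • b)) = β ^ 2 * l2sq (Ψ *ᵥ a) +
      2 * β * t * ((Ψ *ᵥ a) ⬝ᵥ (Ψ *ᵥ b)) + t ^ 2 * l2sq (Ψ *ᵥ b) := by
    rw [mulVec_add, mulVec_smul, mulVec_smul, l2sq_smul_add_smul]
  have h₁ := rhoMinus_mul_l2sq_le Ψ hcard (hsupp α)
  have h₂ := rhoMinus_mul_l2sq_le Ψ hcard (hsupp (-α))
  have h₃ := l2sq_mulVec_le_rhoPlus_mul Ψ hcard (hsupp α)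
  have h₄ := l2sq_mulVec_le_rhoPlus_mul Ψ hcard (hsupp (-α))
  rw [hnorm α rfl, himage] at h₁ h₃
  rw [hnorm (-α) (neg_sq α), himage] at h₂ h₄
  rcases (mul_nonneg (l2Norm_nonneg a) (l2Norm_nonneg b)).eq_or_lt with h0 | hpos
  · have hab : a = 0 ∨ b = 0 := by
      rcases mul_eq_zero.1 h0.symm with h | h
      · exact .inl (l2sq_eq_zero_iff.1 (by rw [← l2Norm_sq, h]; ring))
      · exact .inr (l2sq_eq_zero_iff.1 (by rw [← l2Norm_sq, h]; ring))
    rcases hab with hab | hab <;> simp [α, β, hab, l2Norm]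
  · rw [abs_le]
    constructor <;> nlinarith

end RestrictedIsometry

lemma Finset.exists_subset_card_eq_forall_le {ι α : Type*} [DecidableEq ι] [LinearOrder α]
    (g : ι → α) {S : Finset ι} {k : ℕ} (hk : k ≤ S.card) :
    ∃ B ⊆ S, B.card = k ∧ ∀ i ∈ S \ B, ∀ j ∈ B, g i ≤ g j := by
  induction k with
  | zero => exact ⟨∅, empty_subset _, rfl, by simp⟩
  | succ k ih =>
    obtain ⟨B, hBS, hBcard, hBtop⟩ := ih (Nat.le_of_succ_le hk)
    have hne : (S \ B).Nonempty := by
      rw [← card_pos, card_sdiff_of_subset hBS]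
      omega
    obtain ⟨j₀, hj₀, hj₀max⟩ := exists_max_image (S \ B) g hne
    refine ⟨insert j₀ B, insert_subset (mem_sdiff.1 hj₀).1 hBS, ?_, ?_⟩
    · rw [card_insert_of_notMem (mem_sdiff.1 hj₀).2, hBcard]
    · intro i hi j hj
      have hi' : i ∈ S \ B := by simp_all
      rcases mem_insert.1 hj with rfl | hj
      · exact hj₀max i hi'
      · exact hBtop i hi' j hj

section Shelling

variable {m N : ℕ}

lemma abs_le_l1Norm_restrict_div {B : Finset (Fin N)} {l : ℕ} (hl : 0 < l) (hB : B.card = l)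
    {h : Fin N → ℝ} {i : Fin N} (hi : ∀ j ∈ B, |h i| ≤ |h j|) :
    |h i| ≤ l1Norm (restrict B h) / l := by
  rw [le_div_iff₀ (by exact_mod_cast hl), mul_comm, ← hB, l1Norm_restrict, ← nsmul_eq_mul,
    ← sum_const]
  exact sum_le_sum hi

lemma sqrt_mul_div_self {l : ℕ} (hl : 0 < l) (x : ℝ) : √l * (x / l) = x / √l := by
  have hl' : (0 : ℝ) < l := by exact_mod_cast hl
  field_simp
  rw [Real.sq_sqrt hl'.le]
  ring

/-- Shelling: cut `S` into blocks of `l` entries of `h` in decreasing order of size; the first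
block has `ℓ²` norm at most `√l * c`, each later one at most `ℓ¹(previous block) / √l`. -/
lemma le_of_shelling {h : Fin N → ℝ} {F : Finset (Fin N) → ℝ} {K c : ℝ} (hK : 0 ≤ K)
    (hc : 0 ≤ c) {l : ℕ} (hl : 0 < l) {S : Finset (Fin N)}
    (hsub : ∀ B C, B ⊆ C → C ⊆ S → F C ≤ F B + F (C \ B))
    (hblock : ∀ B ⊆ S, B.card ≤ l → F B ≤ K * l2Norm (restrict B h))
    (hS : ∀ i ∈ S, |h i| ≤ c) :
    F S ≤ K * (√l * c + l1Norm (restrict S h) / √l) := by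
  induction S using Finset.strongInduction generalizing c with
  | H S ih =>
  by_cases hSl : S.card ≤ l
  · calc F S ≤ K * l2Norm (restrict S h) := hblock S subset_rfl hSl
      _ ≤ K * (√l * c) := by gcongr; exact l2Norm_restrict_le_sqrt_mul hc hS hSl
      _ ≤ _ := by
          gcongr
          exact le_add_of_nonneg_right (by positivity [l1Norm_nonneg (restrict S h)])
  obtain ⟨B, hBS, hBcard, hBtop⟩ :=
    exists_subset_card_eq_forall_le (fun i => |h i|) (not_le.1 hSl).le
  have hc' : ∀ i ∈ S \ B, |h i| ≤ l1Norm (restrict B h) / l := fun i hi =>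
    abs_le_l1Norm_restrict_div hl hBcard (hBtop i hi)
  have htail := ih (S \ B) (sdiff_ssubset hBS (card_pos.1 (hBcard ▸ hl)))
    (div_nonneg (l1Norm_nonneg _) l.cast_nonneg)
    (fun B' C hBC hC => hsub B' C hBC (hC.trans sdiff_subset))
    (fun B' hB' => hblock B' (hB'.trans sdiff_subset)) hc'
  have hhead : F B ≤ K * (√l * c) := (hblock B hBS hBcard.le).trans <| by
    gcongr; exact l2Norm_restrict_le_sqrt_mul hc (fun i hi => hS i (hBS hi)) hBcard.le
  calc F S ≤ F B + F (S \ B) := hsub B S hBS subset_rfl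
    _ ≤ K * (√l * c) + K * (√l * (l1Norm (restrict B h) / l) +
          l1Norm (restrict (S \ B) h) / √l) := add_le_add hhead htail
    _ = K * (√l * c + l1Norm (restrict S h) / √l) := by
        rw [sqrt_mul_div_self hl, l1Norm_restrict_eq_add_sdiff hBS]
        ring

lemma abs_dotProduct_mulVec_restrict_le_shelling (Ψ : Matrix (Fin m) (Fin N) ℝ)
    {W S : Finset (Fin N)} (hWS : Disjoint W S) {k l : ℕ} (hl : 0 < l) (hk : W.card + l ≤ k)
    (u : Fin N → ℝ) {h : Fin N → ℝ} {c : ℝ} (hc : 0 ≤ c) (hS : ∀ i ∈ S, |h i| ≤ c) :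
    |(Ψ *ᵥ restrict W u) ⬝ᵥ (Ψ *ᵥ restrict S h)| ≤
      (rhoPlus k Ψ - rhoMinus k Ψ) / 2 * l2Norm (restrict W u) *
        (√l * c + l1Norm (restrict S h) / √l) := by
  have hK : 0 ≤ (rhoPlus k Ψ - rhoMinus k Ψ) / 2 * l2Norm (restrict W u) :=
    mul_nonneg (div_nonneg (sub_nonneg.2 (rhoMinus_le_rhoPlus Ψ k)) zero_le_two)
      (l2Norm_nonneg _)
  refine le_of_shelling (F := fun B => |(Ψ *ᵥ restrict W u) ⬝ᵥ (Ψ *ᵥ restrict B h)|)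
    hK hc hl (fun B C hBC _ => ?_) (fun B hB hBl => ?_) hS
  · rw [← restrict_add_restrict_sdiff hBC h, mulVec_add, dotProduct_add]
    exact abs_add_le _ _
  · exact abs_dotProduct_mulVec_restrict_le Ψ (hWS.mono_right hB) (by omega) u h

end Shelling

section Lasso

variable {Mt Mb N : ℕ}

lemma l1Norm_restrict_compl_le (T : Finset (Fin N)) (x h : Fin N → ℝ) :
    l1Norm (restrict Tᶜ h) ≤
      l1Norm (x + h) - l1Norm x + l1Norm (restrict T h) + 2 * l1Norm (restrict Tᶜ x) := by
  rw [l1Norm_eq_add_compl T (x + h), l1Norm_eq_add_compl T x]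
  simp only [l1Norm_restrict, Pi.add_apply]
  have hT : ∑ i ∈ T, |x i| ≤ ∑ i ∈ T, |x i + h i| + ∑ i ∈ T, |h i| := by
    rw [← sum_add_distrib]
    exact sum_le_sum fun i _ => by simpa using abs_sub (x i + h i) (h i)
  have hTc : ∑ i ∈ Tᶜ, |h i| ≤ ∑ i ∈ Tᶜ, |x i + h i| + ∑ i ∈ Tᶜ, |x i| := by
    rw [← sum_add_distrib]
    exact sum_le_sum fun i _ => by simpa using abs_sub (x i + h i) (x i)
  linarith

lemma dotProduct_mulVec_eq_dotProduct_transpose_mulVec (Φ : Matrix (Fin Mt) (Fin N) ℝ)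
    (h : Fin N → ℝ) (r : Fin Mt → ℝ) : (Φ *ᵥ h) ⬝ᵥ r = h ⬝ᵥ (Φᵀ *ᵥ r) := by
  rw [dotProduct_comm, dotProduct_mulVec, mulVec_transpose, dotProduct_comm]

lemma lasso_basic_inequality (Φ : Matrix (Fin Mt) (Fin N) ℝ) (y : Fin Mt → ℝ) {lam Δ : ℝ}
    {xhat xstar : Fin N → ℝ} (hobj : lassoObj Φ y lam Δ xhat ≤ lassoObj Φ y lam Δ xstar)
    (hdual : linfNorm (Φᵀ *ᵥ (Φ *ᵥ xstar - y)) ≤ lam * Δ / 2) :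
    lam * Δ * (l1Norm xhat - l1Norm xstar) ≤ lam * Δ / 2 * l1Norm (xhat - xstar) := by
  set h := xhat - xstar
  set r := Φ *ᵥ xstar - y
  have hres : Φ *ᵥ xhat - y = Φ *ᵥ h + r := by
    simp only [h, r, mulVec_sub]; abel
  have hcross : -(lam * Δ / 2 * l1Norm h) ≤ (Φ *ᵥ h) ⬝ᵥ r := by
    rw [dotProduct_mulVec_eq_dotProduct_transpose_mulVec, neg_le, mul_comm]
    refine (neg_le_abs _).trans ((abs_dotProduct_le_l1Norm_mul_linfNorm _ _).trans ?_)
    exact mul_le_mul_of_nonneg_left hdual (l1Norm_nonneg h)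
  simp only [lassoObj, hres, l2sq_add] at hobj
  linarith [l2sq_nonneg (Φ *ᵥ h)]

lemma cone_condition_of_lasso (Φ : Matrix (Fin Mt) (Fin N) ℝ) (y : Fin Mt → ℝ) {lam Δ : ℝ}
    (hlamΔ : 0 < lam * Δ) {xhat xstar : Fin N → ℝ}
    (hobj : lassoObj Φ y lam Δ xhat ≤ lassoObj Φ y lam Δ xstar)
    (hdual : linfNorm (Φᵀ *ᵥ (Φ *ᵥ xstar - y)) ≤ lam * Δ / 2) (T : Finset (Fin N)) :
    l1Norm (restrict Tᶜ (xhat - xstar)) ≤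
      3 * l1Norm (restrict T (xhat - xstar)) + 4 * l1Norm (restrict Tᶜ xstar) := by
  have hbasic : l1Norm xhat - l1Norm xstar ≤ l1Norm (xhat - xstar) / 2 := by
    refine le_of_mul_le_mul_left ?_ hlamΔ
    linarith [lasso_basic_inequality Φ y hobj hdual]
  have hdecomp := l1Norm_restrict_compl_le T xstar (xhat - xstar)
  rw [add_sub_cancel] at hdecomp
  linarith [l1Norm_eq_add_compl T (xhat - xstar)]

lemma l2sq_mulVec_sub_le_of_feasible {Φt : Matrix (Fin Mt) (Fin N) ℝ} {yt : Fin Mt → ℝ}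
    {Φb : Matrix (Fin Mb) (Fin N) ℝ} {yb : Fin Mb → ℝ} {Δ : ℝ} {x x' : Fin N → ℝ}
    (hx : x ∈ feasible Φt yt Φb yb Δ) (hx' : x' ∈ feasible Φt yt Φb yb Δ) :
    l2sq (Φt *ᵥ (x - x')) ≤ Mt * Δ ^ 2 := by
  have hcoord (i : Fin Mt) : |(Φt *ᵥ (x - x')) i| ≤ Δ := by
    have hi : (Φt *ᵥ (x - x')) i = (Φt *ᵥ x - yt) i - (Φt *ᵥ x' - yt) i := by
      simp [mulVec_sub]
    rw [hi]
    linarith [abs_sub ((Φt *ᵥ x - yt) i) ((Φt *ᵥ x' - yt) i), hx.1 i, hx'.1 i]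
  have := l2sq_restrict_le_card_mul_sq (T := univ) fun i _ => hcoord i
  rwa [restrict_eq_self (by simp), card_univ, Fintype.card_fin] at this

end Lasso

section ErrorBound

variable {m N : ℕ} {l : ℕ} {T₀ T₁ : Finset (Fin N)} {h : Fin N → ℝ}

lemma abs_le_l1Norm_restrict_div_of_mem_compl_union (hl : 0 < l) (hT₁card : T₁.card = l)
    (hlargest : ∀ i ∈ T₀ᶜ \ T₁, ∀ i' ∈ T₁, |h i| ≤ |h i'|) :
    ∀ i ∈ (T₀ ∪ T₁)ᶜ, |h i| ≤ l1Norm (restrict T₁ h) / l := by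
  intro i hi
  rw [compl_union, ← sdiff_eq_inter_compl] at hi
  exact abs_le_l1Norm_restrict_div hl hT₁card (hlargest i hi)

lemma l1Norm_restrict_compl_eq_add (hT₁sub : T₁ ⊆ T₀ᶜ) :
    l1Norm (restrict T₀ᶜ h) = l1Norm (restrict T₁ h) + l1Norm (restrict (T₀ ∪ T₁)ᶜ h) := by
  rw [l1Norm_restrict_eq_add_sdiff hT₁sub, compl_union, sdiff_eq_inter_compl]

lemma l2Norm_restrict_compl_union_le (hl : 0 < l) (hT₁sub : T₁ ⊆ T₀ᶜ) (hT₁card : T₁.card = l)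
    (hlargest : ∀ i ∈ T₀ᶜ \ T₁, ∀ i' ∈ T₁, |h i| ≤ |h i'|) :
    l2Norm (restrict (T₀ ∪ T₁)ᶜ h) ≤ l1Norm (restrict T₀ᶜ h) / √l := by
  set Y := l1Norm (restrict T₀ᶜ h)
  have hsplit : Y = _ := l1Norm_restrict_compl_eq_add hT₁sub
  have hT₁ := l1Norm_nonneg (restrict T₁ h)
  have htail := l1Norm_nonneg (restrict (T₀ ∪ T₁)ᶜ h)
  rw [← Real.sqrt_sq (div_nonneg (l1Norm_nonneg _) (Real.sqrt_nonneg _)), div_pow,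
    Real.sq_sqrt l.cast_nonneg]
  refine Real.sqrt_le_sqrt ((l2sq_restrict_le_mul_l1Norm
    (abs_le_l1Norm_restrict_div_of_mem_compl_union hl hT₁card hlargest)).trans ?_)
  rw [sq, mul_div_right_comm]
  exact mul_le_mul (by gcongr; linarith) (by linarith) htail
    (div_nonneg (l1Norm_nonneg _) l.cast_nonneg)

lemma abs_dotProduct_mulVec_restrict_union_compl_le (Ψ : Matrix (Fin m) (Fin N) ℝ) {s : ℕ}
    (hl : 0 < l) (hT₀ : T₀.card = s) (hT₁sub : T₁ ⊆ T₀ᶜ) (hT₁card : T₁.card = l)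
    (hlargest : ∀ i ∈ T₀ᶜ \ T₁, ∀ i' ∈ T₁, |h i| ≤ |h i'|) :
    |(Ψ *ᵥ restrict (T₀ ∪ T₁) h) ⬝ᵥ (Ψ *ᵥ restrict (T₀ ∪ T₁)ᶜ h)| ≤
      (rhoPlus (s + 2 * l) Ψ - rhoMinus (s + 2 * l) Ψ) / 2 * l2Norm (restrict (T₀ ∪ T₁) h) *
        (l1Norm (restrict T₀ᶜ h) / √l) := by
  have hcard : (T₀ ∪ T₁).card + l ≤ s + 2 * l := by
    rw [card_union_of_disjoint (disjoint_left.2 fun i hi hi₁ => mem_compl.1 (hT₁sub hi₁) hi)]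
    omega
  convert abs_dotProduct_mulVec_restrict_le_shelling Ψ disjoint_compl_right hl hcard h
    (div_nonneg (l1Norm_nonneg _) l.cast_nonneg)
    (abs_le_l1Norm_restrict_div_of_mem_compl_union hl hT₁card hlargest) using 2
  rw [sqrt_mul_div_self hl, ← add_div, ← l1Norm_restrict_compl_eq_add hT₁sub]

lemma l1Norm_restrict_compl_le_of_cone {s : ℕ} (hT₀ : T₀.card = s) {a : ℝ}
    (hcone : l1Norm (restrict T₀ᶜ h) ≤ 3 * l1Norm (restrict T₀ h) + 4 * a) :
    l1Norm (restrict T₀ᶜ h) ≤ 3 * √s * l2Norm (restrict (T₀ ∪ T₁) h) + 4 * a := by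
  have := (l1Norm_restrict_le_sqrt_card_mul T₀ h).trans (mul_le_mul_of_nonneg_left
    (l2Norm_restrict_mono (subset_union_left (s₂ := T₁)) h) (Real.sqrt_nonneg _))
  rw [hT₀] at this
  linarith

lemma l2Norm_restrict_compl_union_le_of_cone {s : ℕ} (hl : 0 < l) (hT₀ : T₀.card = s)
    (hT₁sub : T₁ ⊆ T₀ᶜ) (hT₁card : T₁.card = l)
    (hlargest : ∀ i ∈ T₀ᶜ \ T₁, ∀ i' ∈ T₁, |h i| ≤ |h i'|) {a : ℝ}
    (hcone : l1Norm (restrict T₀ᶜ h) ≤ 3 * l1Norm (restrict T₀ h) + 4 * a) :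
    l2Norm (restrict (T₀ ∪ T₁)ᶜ h) ≤
      3 * √(s / l) * l2Norm (restrict (T₀ ∪ T₁) h) + 4 * a / √l := by
  calc _ ≤ l1Norm (restrict T₀ᶜ h) / √l :=
        l2Norm_restrict_compl_union_le hl hT₁sub hT₁card hlargest
    _ ≤ (3 * √s * l2Norm (restrict (T₀ ∪ T₁) h) + 4 * a) / √l := by
        gcongr; exact l1Norm_restrict_compl_le_of_cone hT₀ hcone
    _ = _ := by rw [Real.sqrt_div' _ l.cast_nonneg]; ring

lemma restricted_eigenvalue_bound (Ψ : Matrix (Fin m) (Fin N) ℝ) {s : ℕ}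
    (hl : 0 < l) (hT₀ : T₀.card = s) (hT₁sub : T₁ ⊆ T₀ᶜ) (hT₁card : T₁.card = l)
    (hlargest : ∀ i ∈ T₀ᶜ \ T₁, ∀ i' ∈ T₁, |h i| ≤ |h i'|) {a : ℝ}
    (hcone : l1Norm (restrict T₀ᶜ h) ≤ 3 * l1Norm (restrict T₀ h) + 4 * a) :
    A0 s l Ψ * l2Norm (restrict (T₀ ∪ T₁) h) ^ 2 -
      A1 s l Ψ / √l * a * l2Norm (restrict (T₀ ∪ T₁) h) ≤ l2sq (Ψ *ᵥ h) := by
  set W := T₀ ∪ T₁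
  set X := l2Norm (restrict W h)
  set D := rhoPlus (s + 2 * l) Ψ - rhoMinus (s + 2 * l) Ψ
  have hD : 0 ≤ D := sub_nonneg.2 (rhoMinus_le_rhoPlus Ψ _)
  have hX : 0 ≤ X := l2Norm_nonneg _
  have hWcard : W.card ≤ s + l :=
    (card_union_le _ _).trans (by omega)
  have hsplit : l2sq (Ψ *ᵥ h) = l2sq (Ψ *ᵥ restrict W h) +
      2 * ((Ψ *ᵥ restrict W h) ⬝ᵥ (Ψ *ᵥ restrict Wᶜ h)) + l2sq (Ψ *ᵥ restrict Wᶜ h) := by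
    rw [← l2sq_add, ← mulVec_add, restrict_add_restrict_compl]
  have hhead : rhoMinus (s + l) Ψ * X ^ 2 ≤ l2sq (Ψ *ᵥ restrict W h) := by
    rw [l2Norm_sq]
    exact rhoMinus_mul_l2sq_le Ψ hWcard fun i hi => by simp [restrict, hi]
  have hcross := abs_le.1 (abs_dotProduct_mulVec_restrict_union_compl_le Ψ hl hT₀ hT₁sub hT₁card
    hlargest)
  have hY := l1Norm_restrict_compl_le_of_cone hT₀ hcone (T₁ := T₁)
  have hYD : D / 2 * X * (l1Norm (restrict T₀ᶜ h) / √l) ≤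
      D / 2 * X * ((3 * √s * X + 4 * a) / √l) := by gcongr
  have hA0 : A0 s l Ψ = rhoMinus (s + l) Ψ - 3 * (√s / √l) * D := by
    rw [A0, Real.sqrt_div' _ l.cast_nonneg]
  rw [hsplit, hA0, A1]
  have := l2sq_nonneg (Ψ *ᵥ restrict Wᶜ h)
  have hexp : D / 2 * X * ((3 * √s * X + 4 * a) / √l) =
      (3 * (√s / √l) * D * X ^ 2 + 4 * D / √l * a * X) / 2 := by
    field_simp
  linarith

end ErrorBound

theorem stmt15_general {Mt Mb N : ℕ} (Φt : Matrix (Fin Mt) (Fin N) ℝ) (yt : Fin Mt → ℝ)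
    (Φb : Matrix (Fin Mb) (Fin N) ℝ) (yb : Fin Mb → ℝ)
    (lam Δ : ℝ) (hlam : 0 < lam) (hΔ : 0 < Δ)
    (xhat xstar : Fin N → ℝ)
    (hxstarF : xstar ∈ feasible Φt yt Φb yb Δ)
    (hxhatF : xhat ∈ feasible Φt yt Φb yb Δ)
    (hopt : ∀ x ∈ feasible Φt yt Φb yb Δ, lassoObj Φt yt lam Δ xhat ≤ lassoObj Φt yt lam Δ x)
    (hdual : linfNorm (Φt.transpose.mulVec (Φt.mulVec xstar - yt)) ≤ lam * Δ / 2)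
    (s l : ℕ) (hl : 1 ≤ l)
    (T₀ T₁ : Finset (Fin N)) (hT₀ : T₀.card = s)
    (hT₁sub : T₁ ⊆ T₀ᶜ) (hT₁card : T₁.card = l)
    (hlargest : ∀ i ∈ T₀ᶜ \ T₁, ∀ i' ∈ T₁, |(xhat - xstar) i| ≤ |(xhat - xstar) i'|)
    (hA0 : 0 < A0 s l Φt) :
    l2Norm (xhat - xstar) ≤
      C2 s l Φt * Real.sqrt Mt * Δ +
        (C1 s l Φt / Real.sqrt l) * l1Norm (restrict T₀ᶜ xstar) := by
  have hcone := cone_condition_of_lasso Φt yt (mul_pos hlam hΔ) (hopt xstar hxstarF) hdual T₀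
  have hquad := (restricted_eigenvalue_bound Φt hl hT₀ hT₁sub hT₁card hlargest hcone).trans
    (l2sq_mulVec_sub_le_of_feasible hxhatF hxstarF)
  have htail := l2Norm_restrict_compl_union_le_of_cone hl hT₀ hT₁sub hT₁card hlargest hcone
  have hq : (3 * √(s / l)) ^ 2 = 9 * s / l := by
    rw [mul_pow, Real.sq_sqrt (by positivity)]
    ring
  rw [l2Norm_eq_sqrt_add_compl (T₀ ∪ T₁), C1, C2, ← hq]
  exact sqrt_sq_add_sq_le_of_quadratic hA0 (A1_nonneg Φt s l) (Real.sqrt_pos.2 (by positivity))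
    (Nat.cast_nonneg Mt) hΔ.le (l1Norm_nonneg _) (l2Norm_nonneg _) (l2Norm_nonneg _) hquad htail

theorem stmt15 {Mt Mb N : ℕ} (Φt : Matrix (Fin Mt) (Fin N) ℝ) (yt : Fin Mt → ℝ)
    (Φb : Matrix (Fin Mb) (Fin N) ℝ) (yb : Fin Mb → ℝ)
    (lam Δ : ℝ) (hlam : 0 < lam) (hΔ : 0 < Δ)
    (xhat xstar : Fin N → ℝ)
    (hxstarF : xstar ∈ feasible Φt yt Φb yb Δ)
    (hxhatF : xhat ∈ feasible Φt yt Φb yb Δ)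
    (hopt : ∀ x ∈ feasible Φt yt Φb yb Δ, lassoObj Φt yt lam Δ xhat ≤ lassoObj Φt yt lam Δ x)
    (hdual : linfNorm (Φt.transpose.mulVec (Φt.mulVec xstar - yt)) ≤ lam * Δ / 2)
    (s l : ℕ) (hs : 1 ≤ s) (hl : 1 ≤ l)
    (T₀ T₁ : Finset (Fin N)) (hT₀ : T₀.card = s)
    (hT₁sub : T₁ ⊆ T₀ᶜ) (hT₁card : T₁.card = l)
    (hlargest : ∀ i ∈ T₀ᶜ \ T₁, ∀ i' ∈ T₁, |(xhat - xstar) i| ≤ |(xhat - xstar) i'|)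
    (hA0 : 0 < A0 s l Φt) :
    l2Norm (xhat - xstar) ≤
      C2 s l Φt * Real.sqrt Mt * Δ +
        (C1 s l Φt / Real.sqrt l) * l1Norm (restrict T₀ᶜ xstar) :=
  stmt15_general Φt yt Φb yb lam Δ hlam hΔ xhat xstar hxstarF hxhatF hopt hdual s l hl T₀ T₁ hT₀
    hT₁sub hT₁card hlargest hA0
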